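/- arXiv:1902.01161 — 3 statements merged into one kernel-verified Lean document; each statement's English description precedes it below -/
import Mathlib

section
/- Let $s \geq 2$ and let $c_1, \dots, c_s$ be pairwise distinct real numbers with $c_s = 1$ and $c_i < 1$ for $i = 1, \dots, s-1$. Let $V_1$ be the $s \times s$ Vandermonde matrix with entries $(V_1)_{ij} = (c_i - 1)^{j-1}$, and define $\tilde{c} = V_1^{-1} (c - e)^s$, where $(c-e)^s$ denotes the vector with components $(c_i - 1)^s$ and $e = (1,\dots,1)^T$. Then $\tilde{c}_1 = 0$ and $\tilde{c}_j \neq 0$ for all $j = 2, \dots, s$. -/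
/-!
With `x i = c i - 1`, the vector `(c - e)^s` lists the values `x i ^ s` of `X ^ s - ∏ i, (X - x i)`,
a polynomial of degree `< s`, so `ctilde` is its coefficient vector: `ctilde j` is minus the
`j`-th coefficient of the node polynomial `∏ i, (X - x i)`. As `x` vanishes at the last node and is
negative at the others, that polynomial is `X` times a product of factors `X + a` with `a > 0`, whose
coefficients are all positive.
-/

open Matrix Polynomial

namespace Polynomial

section CommRing

variable {R : Type*} [CommRing R]

theorem eval_prod_X_sub_C_of_mem {ι : Type*} {s : Finset ι} (v : ι → R) {i : ι} (hi : i ∈ s) :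
    (∏ j ∈ s, (X - C (v j))).eval (v i) = 0 := by
  rw [eval_prod]
  exact Finset.prod_eq_zero hi (by simp)

theorem natDegree_X_pow_sub_prod_X_sub_C_lt [Nontrivial R] {n : ℕ} (hn : n ≠ 0) (v : Fin n → R) :
    (X ^ n - ∏ i, (X - C (v i))).natDegree < n := by
  refine (isMonicOfDegree_X_pow R n).natDegree_sub_lt hn ⟨?_, monic_prod_X_sub_C v _⟩
  simp

end CommRing

theorem coeff_prod_X_sub_C_pos {R ι : Type*} [CommRing R] [PartialOrder R] [IsStrictOrderedRing R]
    (s : Finset ι) {r : ι → R} (hr : ∀ i ∈ s, r i < 0) {k : ℕ} (hk : k ≤ s.card) :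
    0 < (∏ i ∈ s, (X - C (r i))).coeff k := by
  simp_rw [sub_eq_add_neg, ← C_neg]
  rw [Finset.prod_X_add_C_coeff s _ hk]
  refine Finset.sum_pos (fun t ht => Finset.prod_pos fun i hi => ?_)
    (Finset.powersetCard_nonempty.mpr (Nat.sub_le _ _))
  exact neg_pos.mpr (hr i ((Finset.mem_powersetCard.mp ht).1 hi))

end Polynomial

namespace Matrix

theorem vandermonde_mulVec_coeff {R : Type*} [CommRing R] {n : ℕ} (v : Fin n → R) {p : R[X]}
    (hp : p.natDegree < n) :
    vandermonde v *ᵥ (fun j : Fin n => p.coeff j) = fun i => p.eval (v i) := by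
  funext i
  rw [eval_eq_sum_range' hp, Finset.sum_range fun j : ℕ => p.coeff j * v i ^ j]
  simp only [mulVec, dotProduct, vandermonde_apply, mul_comm]

variable {K : Type*} [Field K] {n : ℕ} {v : Fin n → K}

theorem inv_vandermonde_mulVec_eval (hv : Function.Injective v) {p : K[X]} (hp : p.natDegree < n) :
    (vandermonde v)⁻¹ *ᵥ (fun i => p.eval (v i)) = fun j : Fin n => p.coeff j := by
  have hdet : IsUnit (vandermonde v).det := (det_vandermonde_ne_zero_iff.mpr hv).isUnit
  rw [← vandermonde_mulVec_coeff v hp, mulVec_mulVec, nonsing_inv_mul _ hdet, one_mulVec]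

theorem inv_vandermonde_mulVec_pow (hv : Function.Injective v) (hn : n ≠ 0) :
    (vandermonde v)⁻¹ *ᵥ (fun i => v i ^ n) = fun j : Fin n => -(∏ i, (X - C (v i))).coeff j := by
  have heval (i : Fin n) : (X ^ n - ∏ i, (X - C (v i))).eval (v i) = v i ^ n := by
    simp [eval_prod_X_sub_C_of_mem v (Finset.mem_univ i)]
  simp_rw [← heval, inv_vandermonde_mulVec_eval hv (natDegree_X_pow_sub_prod_X_sub_C_lt hn v)]
  funext j
  simp [coeff_X_pow, j.isLt.ne]

end Matrix

theorem stmt0 (s : ℕ) (hs : 2 ≤ s) (c : Fin s → ℝ)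
    (hc_inj : Function.Injective c)
    (hlast : c ⟨s - 1, by omega⟩ = 1)
    (hlt : ∀ i : Fin s, (i : ℕ) < s - 1 → c i < 1) :
    let V1 : Matrix (Fin s) (Fin s) ℝ := Matrix.of fun i j => (c i - 1) ^ (j : ℕ)
    let ctilde : Fin s → ℝ := V1⁻¹ *ᵥ (fun i => (c i - 1) ^ s)
    ctilde ⟨0, by omega⟩ = 0 ∧ ∀ j : Fin s, 1 ≤ (j : ℕ) → ctilde j ≠ 0 := by
  intro V1 ctilde
  set x : Fin s → ℝ := fun i => c i - 1
  set last : Fin s := ⟨s - 1, by omega⟩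
  have hx : Function.Injective x := fun a b h => hc_inj (sub_left_injective h)
  have hx_last : x last = 0 := sub_eq_zero.mpr hlast
  have hx_neg : ∀ i ∈ Finset.univ.erase last, x i < 0 := by
    intro i hi
    have hi_ne : (i : ℕ) ≠ s - 1 := Fin.val_ne_of_ne (Finset.ne_of_mem_erase hi)
    exact sub_neg.mpr (hlt i (by omega))
  have hprod : ∏ i, (X - C (x i)) = X * ∏ i ∈ Finset.univ.erase last, (X - C (x i)) := by
    rw [← Finset.mul_prod_erase _ _ (Finset.mem_univ last), hx_last, C_0, sub_zero]
  have hct :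
      ctilde = fun j : Fin s => -(X * ∏ i ∈ Finset.univ.erase last, (X - C (x i))).coeff j := by
    rw [← hprod]
    exact inv_vandermonde_mulVec_pow hx (by omega)
  refine ⟨by simp [hct], fun j hj => ?_⟩
  obtain ⟨m, hm⟩ := Nat.exists_eq_add_of_le' hj
  rw [hct]
  simp only [hm, coeff_X_mul, neg_ne_zero]
  exact (coeff_prod_X_sub_C_pos _ hx_neg (by simp; omega)).ne'
end

section
/- There is no two-stage IMEX-Peer method super-convergent for variable step sizes with nodes $c_1 = 0$, $c_2 = 1$: with $c = (0,1)^T$, $P = \begin{pmatrix} p_1 & 1-p_1 \\ p_2 & 1-p_2 \end{pmatrix}$, $R = \begin{pmatrix} \gamma & 0 \\ r_{21} & \gamma \end{pmatrix}$ with $\gamma > 0$, any nonzero vector $v$ with $(I - P^T) v = 0$ and $v^T(C - I)V_1 \tilde{D} V_1^{-1} (c-e)^s = 0$ must be a scalar multiple of $(0,1)^T$, and for such $v$ the conditions $v^T(c^j - j R c^{j-1}) = 0$ for $j = 2, 3$ read $1 - 2\gamma = 0$ and $1 - 3\gamma = 0$, which are mutually incompatible; hence no choice of parameters satisfies all the super-convergence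 conditions simultaneously. -/
open Matrix

theorem stmt3 (p₁ p₂ γ r₂₁ : ℝ) (hγ : 0 < γ) :
    let c : Fin 2 → ℝ := ![0, 1]
    let P : Matrix (Fin 2) (Fin 2) ℝ := !![p₁, 1 - p₁; p₂, 1 - p₂]
    let R : Matrix (Fin 2) (Fin 2) ℝ := !![γ, 0; r₂₁, γ]
    let C : Matrix (Fin 2) (Fin 2) ℝ := Matrix.diagonal c
    let V1 : Matrix (Fin 2) (Fin 2) ℝ := Matrix.of fun i (j : Fin 2) => (c i - 1) ^ (j : ℕ)
    let Dt : Matrix (Fin 2) (Fin 2) ℝ := Matrix.diagonal ![2, 1/2]  -- D̃ = 3 D⁻¹ - I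
    ¬ ∃ v : Fin 2 → ℝ, v ≠ 0 ∧
      Pᵀ *ᵥ v = v ∧
      v ⬝ᵥ ((C - 1) * V1 * Dt * V1⁻¹) *ᵥ (fun i => (c i - 1) ^ 2) = 0 ∧
      (∀ j : ℕ, 2 ≤ j → j ≤ 3 →
        v ⬝ᵥ ((fun i => c i ^ j) - (j : ℝ) • (R *ᵥ fun i => c i ^ (j - 1))) = 0) := by
  intro c P R C V1 Dt
  rintro ⟨v, hv, hP, hV, hj⟩
  have hV1 : V1 = !![1, -1; 1, 0] := by
    ext i j
    fin_cases i <;> fin_cases j <;> simp [V1, c]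
  have hinv : V1⁻¹ = !![0, 1; -1, 1] := by
    rw [hV1]
    apply Matrix.inv_eq_right_inv
    norm_num [Matrix.mul_fin_two]
    exact Matrix.one_fin_two.symm
  have hM : (C - 1) * V1 * Dt * V1⁻¹ = !![-1/2, -3/2; 0, 0] := by
    rw [hinv, hV1]
    have hC : C = !![(0:ℝ), 0; 0, 1] := by
      ext i j; fin_cases i <;> fin_cases j <;> simp [C, c]
    have hDt : Dt = !![(2:ℝ), 0; 0, 1/2] := by
      ext i j; fin_cases i <;> fin_cases j <;> simp [Dt]
    rw [hC, hDt]
    ext i j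
    fin_cases i <;> fin_cases j <;>
      simp [Matrix.mul_apply, Fin.sum_univ_two, Matrix.one_apply] <;> norm_num
  rw [hM] at hV
  have h2 := hj 2 (by norm_num) (by norm_num)
  have h3 := hj 3 (by norm_num) (by norm_num)
  simp [c, R, Matrix.mulVec, dotProduct, Fin.sum_univ_two] at h2 h3 hV
  -- h2 : v 1 * (1 - 2γ) = 0, h3 : v 1 * (1 - 3γ) = 0, hV : v 0 * (-1/2) = 0
  have hv1 : v 1 = 0 := by
    rcases h2 with h2 | h2
    · exact h2
    rcases h3 with h3 | h3
    · exact h3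
    nlinarith
  apply hv
  ext i; fin_cases i <;> simp [hV, hv1]
end

section
/- Let $s \geq 1$, let $c_1, \dots, c_s$ be pairwise distinct reals, and let the stage-order-$s$ condition define $Q(\sigma)$ as in the variable step size Peer method. Define the defect $d_{s+1}(\sigma) = \frac{1}{(s+1)!}\big( c^{s+1} - \sigma^{-(s+1)} P (c - e)^{s+1} - (s+1)\sigma^{-s} Q(\sigma)(c-e)^s - (s+1) R c^s \big)$. Then for every vector $v \in \mathbb{R}^s$ with $P^T v = v$, the scalar function $\sigma \mapsto v^T d_{s+1}(\sigma)$ is a polynomial in $\sigma^{-1}$ of degree at most $s+1$: there exist $\sigma$-independent reals $h_0, h_1, \dots, h_{s+1}$ such that $v^T d_{s+1}(\sigma) = h_0 + \sum_{j=1}^{s} h_j \sigma^{-j} + h_{s+1}\sigma^{-(s+1)}$, where $h_0 = \frac{1}{(s+1)!} v^T ( c^{s+1} - (s+1) R c^s )$ and $h_{s+1} = \frac{1}{(s+1)!} v^T (C - I) V_1 \tilde{D} V_1^{-1} (c-e)^s$ with $\tilde{D} = (s+1)D^{-1} - I$. -/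
open Matrix

set_option maxHeartbeats 1000000

theorem stmt6 (s : ℕ) (hs : 1 ≤ s) (c : Fin s → ℝ)
    (hc_inj : Function.Injective c)
    (P R : Matrix (Fin s) (Fin s) ℝ)
    (v : Fin s → ℝ) (hv : Pᵀ *ᵥ v = v) :
    let V0 : Matrix (Fin s) (Fin s) ℝ := Matrix.of fun i (j : Fin s) => c i ^ (j : ℕ)
    let V1 : Matrix (Fin s) (Fin s) ℝ := Matrix.of fun i (j : Fin s) => (c i - 1) ^ (j : ℕ)
    let D : Matrix (Fin s) (Fin s) ℝ := Matrix.diagonal fun j => ((j : ℕ) + 1 : ℝ)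
    let C : Matrix (Fin s) (Fin s) ℝ := Matrix.diagonal c
    let Dt : Matrix (Fin s) (Fin s) ℝ := ((s : ℝ) + 1) • D⁻¹ - 1
    let S : ℝ → Matrix (Fin s) (Fin s) ℝ := fun σ => Matrix.diagonal fun j => σ ^ (j : ℕ)
    let Q : ℝ → Matrix (Fin s) (Fin s) ℝ :=
      fun σ => ((C * V0 - R * V0 * D) * S σ - (1 / σ) • (P * (C - 1) * V1)) * (V1 * D)⁻¹
    let d : ℝ → (Fin s → ℝ) := fun σ =>
      ((1 : ℝ) / (s + 1).factorial) •
        ((fun i => c i ^ (s + 1))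
          - σ ^ (-(s + 1 : ℤ)) • (P *ᵥ fun i => (c i - 1) ^ (s + 1))
          - (((s : ℝ) + 1) * σ ^ (-(s : ℤ))) • (Q σ *ᵥ fun i => (c i - 1) ^ s)
          - ((s : ℝ) + 1) • (R *ᵥ fun i => c i ^ s))
    ∃ h : Fin (s + 2) → ℝ,
      (∀ σ : ℝ, 0 < σ → v ⬝ᵥ d σ = ∑ j : Fin (s + 2), h j * σ ^ (-(j : ℤ))) ∧
      h 0 = ((1 : ℝ) / (s + 1).factorial) *
        (v ⬝ᵥ ((fun i => c i ^ (s + 1)) - ((s : ℝ) + 1) • (R *ᵥ fun i => c i ^ s))) ∧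
      h (Fin.last (s + 1)) = ((1 : ℝ) / (s + 1).factorial) *
        (v ⬝ᵥ ((C - 1) * V1 * Dt * V1⁻¹) *ᵥ (fun i => (c i - 1) ^ s)) := by
  intro V0 V1 D C Dt S Q d
  classical
  have hvP : ∀ x : Fin s → ℝ, v ⬝ᵥ (P *ᵥ x) = v ⬝ᵥ x := by
    intro x
    rw [Matrix.dotProduct_mulVec, ← Matrix.mulVec_transpose, hv]
  have hV1 : IsUnit V1.det := by
    refine Ne.isUnit ?_
    have : V1 = Matrix.vandermonde (fun i => c i - 1) := rfl
    rw [this, Matrix.det_vandermonde_ne_zero_iff]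
    intro i j hij
    simp only at hij
    exact hc_inj (by linarith : c i = c j)
  set N : ℝ := (1 : ℝ) / (s + 1).factorial with hN
  set k : ℝ := (s : ℝ) + 1 with hk
  set w : Fin s → ℝ := fun i => (c i - 1) ^ s with hw
  set u : Fin s → ℝ := (V1 * D)⁻¹ *ᵥ w with hu
  set a : Fin s → ℝ := (C * V0 - R * V0 * D)ᵀ *ᵥ v with ha
  set A : ℝ := v ⬝ᵥ (fun i => c i ^ (s + 1)) with hA
  set B : ℝ := v ⬝ᵥ (fun i => (c i - 1) ^ (s + 1)) with hB
  set E : ℝ := v ⬝ᵥ (((C - 1) * V1) *ᵥ u) with hE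
  set F : ℝ := v ⬝ᵥ (R *ᵥ fun i => c i ^ s) with hF
  set a' : ℕ → ℝ := fun n => if h : n < s then a ⟨n, h⟩ * u ⟨n, h⟩ else 0 with ha'
  set g : ℕ → ℝ := fun m =>
    if m = 0 then N * A - N * (k * F)
    else if m = s + 1 then N * (k * E) - N * B
    else -(N * k) * a' (s - m) with hg
  refine ⟨fun j => g j, ?_, ?_, ?_⟩
  · intro σ hσpos
    have hσ0 : σ ≠ 0 := ne_of_gt hσpos
    -- evaluate the Q term
    have hQw : v ⬝ᵥ (Q σ *ᵥ w) =
        (∑ j : Fin s, a j * u j * σ ^ (j : ℕ)) - (1 / σ) * E := by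
      unfold Q
      rw [← Matrix.mulVec_mulVec, ← hu, Matrix.sub_mulVec, dotProduct_sub,
        Matrix.smul_mulVec, dotProduct_smul, smul_eq_mul]
      congr 1
      · rw [← Matrix.mulVec_mulVec, Matrix.dotProduct_mulVec, ← Matrix.mulVec_transpose, ← ha]
        unfold S
        simp only [dotProduct, Matrix.mulVec_diagonal]
        refine Finset.sum_congr rfl fun j _ => ?_
        ring
      · rw [Matrix.mul_assoc P, ← Matrix.mulVec_mulVec, hvP, ← hE]
    -- expand the left-hand side
    have hd : v ⬝ᵥ d σ =
        N * (A - σ ^ (-(s + 1 : ℤ)) * B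
          - (k * σ ^ (-(s : ℤ))) * ((∑ j : Fin s, a j * u j * σ ^ (j : ℕ)) - (1 / σ) * E)
          - k * F) := by
      unfold d
      rw [← hN, ← hk, ← hw,
        dotProduct_smul, dotProduct_sub, dotProduct_sub,
        dotProduct_sub, dotProduct_smul, dotProduct_smul,
        dotProduct_smul, hvP, hQw, ← hA, ← hB, ← hF]
      simp only [smul_eq_mul]
    rw [hd]
    -- expand the right-hand side
    rw [Fin.sum_univ_castSucc, Fin.sum_univ_succ]
    simp only [Fin.val_last, Fin.coe_castSucc, Fin.val_succ, Fin.val_zero]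
    have hg0 : g 0 = N * A - N * (k * F) := by simp [hg]
    have hglast : g (s + 1) = N * (k * E) - N * B := by simp [hg]
    rw [hg0, hglast]
    have hmid : (∑ x : Fin s, g ((x : ℕ) + 1) * σ ^ (-(((x : ℕ) + 1 : ℕ) : ℤ)))
        = ∑ j ∈ Finset.range s, (-(N * k) * a' j) * σ ^ ((j : ℤ) - (s : ℤ)) := by
      rw [Fin.sum_univ_eq_sum_range (fun n => g (n + 1) * σ ^ (-((n + 1 : ℕ) : ℤ)))]
      rw [← Finset.sum_range_reflect]
      refine Finset.sum_congr rfl fun j hj => ?_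
      have hjs : j < s := Finset.mem_range.mp hj
      have e1 : s - 1 - j + 1 = s - j := by omega
      have e2 : s - j ≠ 0 := by omega
      have e3 : s - j ≠ s + 1 := by omega
      have e4 : s - (s - j) = j := by omega
      rw [e1]
      have hgval : g (s - j) = -(N * k) * a' j := by
        simp only [hg]
        rw [if_neg e2, if_neg e3, e4]
      rw [hgval]
      congr 1
      have : (-((s - j : ℕ) : ℤ)) = (j : ℤ) - (s : ℤ) := by
        rw [Nat.cast_sub (le_of_lt hjs)]; ring
      rw [this]
    rw [hmid]
    have hpow2 : σ ^ (-(s : ℤ)) = (σ ^ s)⁻¹ := by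
      rw [_root_.zpow_neg, _root_.zpow_natCast]
    have hpow3 : σ ^ (-((s : ℤ) + 1)) = (σ ^ s)⁻¹ * σ⁻¹ := by
      rw [show -((s : ℤ) + 1) = -(s : ℤ) + (-1) by ring, zpow_add₀ hσ0, _root_.zpow_neg_one, hpow2]
    have hfin : (∑ j : Fin s, a j * u j * σ ^ (j : ℕ))
        = ∑ j ∈ Finset.range s, a' j * σ ^ j := by
      rw [← Fin.sum_univ_eq_sum_range (fun n => a' n * σ ^ n)]
      refine Finset.sum_congr rfl fun j _ => ?_
      simp only [ha', dif_pos j.isLt, Fin.eta]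
    have hsum3 : ∑ j ∈ Finset.range s, (-(N * k) * a' j) * σ ^ ((j : ℤ) - (s : ℤ))
        = -(N * k) * ((∑ j ∈ Finset.range s, a' j * σ ^ j) * (σ ^ s)⁻¹) := by
      rw [Finset.sum_mul, Finset.mul_sum]
      refine Finset.sum_congr rfl fun j hj => ?_
      rw [zpow_sub₀ hσ0, _root_.zpow_natCast, _root_.zpow_natCast, div_eq_mul_inv]
      ring
    rw [hfin, hsum3]
    simp only [Nat.cast_zero, neg_zero, zpow_zero, Nat.cast_add, Nat.cast_one, hpow2, hpow3]
    ring
  · show g ((0 : Fin (s + 2)) : ℕ) = _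
    have hg0 : g 0 = N * A - N * (k * F) := by simp [hg]
    simp only [Fin.val_zero]
    rw [hg0, dotProduct_sub, dotProduct_smul, smul_eq_mul, ← hA, ← hF]
    ring
  · show g ((Fin.last (s + 1) : Fin (s + 2)) : ℕ) = _
    simp only [Fin.val_last]
    have hgl : g (s + 1) = N * (k * E) - N * B := by simp [hg]
    rw [hgl]
    have hDt : (C - 1) * V1 * Dt * V1⁻¹
        = k • ((C - 1) * (V1 * (D⁻¹ * V1⁻¹))) - (C - 1) * (V1 * V1⁻¹) := by
      unfold Dt
      rw [← hk]
      simp only [Matrix.mul_sub, Matrix.sub_mul, Matrix.mul_one, Matrix.mul_smul,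
        Matrix.smul_mul, Matrix.mul_assoc]
    have hE2 : v ⬝ᵥ ((C - 1) * (V1 * (D⁻¹ * V1⁻¹))) *ᵥ w = E := by
      rw [show (C - 1) * (V1 * (D⁻¹ * V1⁻¹)) = ((C - 1) * V1) * (V1 * D)⁻¹ by
        rw [Matrix.mul_inv_rev, Matrix.mul_assoc], ← Matrix.mulVec_mulVec, ← hu, hE]
    have hB2 : v ⬝ᵥ ((C - 1) * (V1 * V1⁻¹)) *ᵥ w = B := by
      rw [Matrix.mul_nonsing_inv _ hV1, Matrix.mul_one, hB]
      congr 1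
      funext i
      rw [Matrix.sub_mulVec, Matrix.one_mulVec]
      unfold C
      simp only [Pi.sub_apply, Matrix.mulVec_diagonal, hw]
      ring
    rw [hDt, Matrix.sub_mulVec, dotProduct_sub, Matrix.smul_mulVec,
      dotProduct_smul, smul_eq_mul, hE2, hB2]
    ring
end
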